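/- arXiv:2412.18523 — 2 statements merged into one kernel-verified Lean document; each statement's English description precedes it below -/
import Mathlib

section
/- Let W be a one-dimensional standard Brownian motion. For all constants 0 < δ ≤ T < ∞ and θ > 0, the modulus of continuity ω(W_T; δ) = sup{|W(t) − W(s)| : 0 ≤ s ≤ t ≤ T, t − s ≤ δ} satisfies P( ω(W_T; δ) ≥ 4 √(δ (θ² + log(T/δ))) ) ≤ 8 exp(−θ²). -/
/-!
Along any finite grid in a window `[t₀, t₀ + h]`, `exp (c (W t - W t₀))` is a nonnegative
submartingale (the Gaussian increments have mgf `≥ 1` and are independent of the past), so Doob's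
maximal inequality with `c = a / h` bounds the probability that `W - W t₀` reaches `a` on the grid
by `exp (-a² / 2h)`. Path continuity carries this over to the whole window through dyadic grids,
and applying it to `-W` as well bounds `|W - W t₀|`. If `ω(W_T; δ) > 2a`, then `|W t - W (iδ)| > a`
for some `t ∈ [iδ, iδ + 2δ]` in one of `⌈T/δ⌉ ≤ 2T/δ` windows, and a union bound with
`a² = 4δ(θ² + log (T/δ) - log 2)` gives `8 exp (-θ²)`.
-/

open MeasureTheory ProbabilityTheory Set

/-- A one-dimensional standard Brownian motion: continuous paths started at `0`, with
independent Gaussian increments `W t - W s ∼ N(0, t - s)`. -/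
def IsBrownianMotion {Ω : Type*} [MeasurableSpace Ω] (P : Measure Ω)
    (W : ℝ → Ω → ℝ) : Prop :=
  (∀ ω, Continuous fun t => W t ω) ∧ (∀ ω, W 0 ω = 0) ∧ (∀ t, Measurable (W t)) ∧
  (∀ s t : ℝ, 0 ≤ s → s ≤ t →
    P.map (fun ω => W t ω - W s ω) = gaussianReal 0 (Real.toNNReal (t - s))) ∧
  (∀ (m : ℕ) (u : ℕ → ℝ), Monotone u → 0 ≤ u 0 →
    iIndepFun
      (fun (k : Fin m) ω => W (u (k + 1)) ω - W (u k) ω) P)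

/-- Modulus of continuity of the path `x` stopped at time `t`, at scale `δ`. -/
noncomputable def modulus (x : ℝ → ℝ) (t δ : ℝ) : ℝ :=
  sSup {d : ℝ | ∃ r s : ℝ, 0 ≤ r ∧ r ≤ s ∧ s ≤ t ∧ s - r ≤ δ ∧ d = |x s - x r|}

open Real

section MaximalInequality

variable {Ω : Type*} {m0 : MeasurableSpace Ω} {P : Measure Ω}

theorem ProbabilityTheory.iIndepFun_of_forall_fin {β : Type*} [MeasurableSpace β]
    {Y : ℕ → Ω → β} (hY : ∀ m, iIndepFun (fun k : Fin m => Y k) P) : iIndepFun Y P := by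
  rw [iIndepFun_iff_measure_inter_preimage_eq_mul]
  intro S sets hsets
  obtain ⟨m, hm⟩ : ∃ m, ∀ i ∈ S, i < m :=
    ⟨S.sup id + 1, fun i hi => Nat.lt_succ_of_le (Finset.le_sup (f := id) hi)⟩
  have hS_range : ∀ i ∈ S, i ∈ range (Fin.val : Fin m → ℕ) := fun i hi => ⟨⟨i, hm i hi⟩, rfl⟩
  have hprod := (hY m).measure_inter_preimage_eq_mul
    (S.preimage Fin.val Fin.val_injective.injOn) (sets := fun i => sets i)
    (fun i hi => hsets i (Finset.mem_preimage.1 hi))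
  rw [Finset.prod_preimage Fin.val S _ (fun i => P (Y i ⁻¹' sets i))
    (fun i hi hi' => absurd (hS_range i hi) hi')] at hprod
  rw [← hprod]
  congr 1
  ext ω
  simp only [mem_iInter, Finset.mem_preimage]
  exact ⟨fun h i hi => h i hi, fun h i hi => by obtain ⟨j, rfl⟩ := hS_range i hi; exact h j hi⟩

theorem MeasureTheory.submartingale_exp_mul_of_indep [IsFiniteMeasure P] {ℱ : Filtration ℕ m0}
    {S : ℕ → Ω → ℝ} (hS : StronglyAdapted ℱ S) {c : ℝ}
    (hindep : ∀ k, Indep (ℱ k) (MeasurableSpace.comap (S (k + 1) - S k) inferInstance) P)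
    (hint : ∀ k, Integrable (fun ω => exp (c * S k ω)) P)
    (hmgf : ∀ k, 1 ≤ mgf (S (k + 1) - S k) P c) :
    Submartingale (fun k ω => exp (c * S k ω)) ℱ P := by
  have hexp_meas : ∀ k, Measurable[ℱ k] fun ω => exp (c * S k ω) :=
    fun k => continuous_exp.measurable.comp ((hS k).measurable.const_mul c)
  have hincr_meas : ∀ k, Measurable (S (k + 1) - S k) := fun k =>
    ((hS (k + 1)).mono (ℱ.le _)).measurable.sub ((hS k).mono (ℱ.le k)).measurable
  refine submartingale_of_setIntegral_le_succ (fun k => (hexp_meas k).stronglyMeasurable)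
    hint fun k s hs => ?_
  have hind : IndepFun (s.indicator fun ω => exp (c * S k ω))
      (fun ω => exp (c * (S (k + 1) - S k) ω)) P :=
    indep_of_indep_of_le (hindep k) ((hexp_meas k).indicator hs).comap_le
      (continuous_exp.measurable.comp ((comap_measurable _).const_mul c)).comap_le
  have hsplit : s.indicator (fun ω => exp (c * S (k + 1) ω)) =
      (s.indicator fun ω => exp (c * S k ω)) * fun ω => exp (c * (S (k + 1) - S k) ω) := by
    ext ω
    by_cases hω : ω ∈ s <;> simp [hω, ← exp_add, mul_sub]
  calc ∫ ω in s, exp (c * S k ω) ∂P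
      ≤ (∫ ω in s, exp (c * S k ω) ∂P) * mgf (S (k + 1) - S k) P c :=
        le_mul_of_one_le_right (setIntegral_nonneg (ℱ.le k s hs) fun ω _ => (exp_pos _).le)
          (hmgf k)
    _ = ∫ ω in s, exp (c * S (k + 1) ω) ∂P := by
        rw [← integral_indicator (ℱ.le k s hs), ← integral_indicator (ℱ.le k s hs), hsplit,
          hind.integral_mul_eq_mul_integral
            (((hexp_meas k).indicator hs).mono (ℱ.le k) le_rfl).aestronglyMeasurable
            (continuous_exp.measurable.comp ((hincr_meas k).const_mul c)).aestronglyMeasurable]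
        rfl

theorem MeasureTheory.Submartingale.measure_exists_ge_le [IsFiniteMeasure P]
    {ℱ : Filtration ℕ m0} {S : ℕ → Ω → ℝ} {c : ℝ}
    (hsub : Submartingale (fun k ω => exp (c * S k ω)) ℱ P) (hc : 0 < c) (a : ℝ) (m : ℕ) :
    P {ω | ∃ k ≤ m, a ≤ S k ω} ≤ ENNReal.ofReal (exp (-(c * a)) * mgf (S m) P c) := by
  set F := {ω | ((exp (c * a)).toNNReal : ℝ) ≤
    (Finset.range (m + 1)).sup' Finset.nonempty_range_add_one fun k => exp (c * S k ω)}
  have hsub_F : {ω | ∃ k ≤ m, a ≤ S k ω} ⊆ F := by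
    rintro ω ⟨k, hkm, hk⟩
    rw [mem_ofPred_eq, Real.coe_toNNReal _ (exp_pos _).le]
    exact Finset.le_sup'_of_le _ (Finset.mem_range.2 (Nat.lt_succ_of_le hkm))
      (exp_le_exp.2 (mul_le_mul_of_nonneg_left hk hc.le))
  have hdoob := maximal_ineq hsub (fun k ω => (exp_pos _).le) (ε := (exp (c * a)).toNNReal) m
  calc P {ω | ∃ k ≤ m, a ≤ S k ω} ≤ P F := measure_mono hsub_F
    _ = ENNReal.ofReal (exp (-(c * a))) * (ENNReal.ofReal (exp (c * a)) * P F) := by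
        rw [← mul_assoc, ← ENNReal.ofReal_mul (exp_pos _).le, ← exp_add, neg_add_cancel,
          exp_zero, ENNReal.ofReal_one, one_mul]
    _ ≤ ENNReal.ofReal (exp (-(c * a))) * ENNReal.ofReal (mgf (S m) P c) := by
        gcongr
        exact hdoob.trans (ENNReal.ofReal_le_ofReal (setIntegral_le_integral (hsub.integrable m)
          (Filter.Eventually.of_forall fun ω => (exp_pos _).le)))
    _ = ENNReal.ofReal (exp (-(c * a)) * mgf (S m) P c) :=
        (ENNReal.ofReal_mul (exp_pos _).le).symm

theorem ProbabilityTheory.iIndepFun.measure_exists_sum_range_ge_le {Y : ℕ → Ω → ℝ}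
    (hY : iIndepFun Y P) (hmeas : ∀ i, Measurable (Y i)) {c : ℝ} (hc : 0 < c)
    (hint : ∀ i, Integrable (fun ω => exp (c * Y i ω)) P) (hmgf : ∀ i, 1 ≤ mgf (Y i) P c)
    (a : ℝ) (m : ℕ) :
    P {ω | ∃ k ≤ m, a ≤ ∑ i ∈ Finset.range k, Y i ω} ≤
      ENNReal.ofReal (exp (-(c * a)) * mgf (fun ω => ∑ i ∈ Finset.range m, Y i ω) P c) := by
  have := hY.isProbabilityMeasure
  set S : ℕ → Ω → ℝ := fun k ω => ∑ i ∈ Finset.range k, Y i ω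
  have hincr : ∀ k, S (k + 1) - S k = Y k := fun k => by
    ext ω; simp [S, Finset.sum_range_succ]
  set M : ℕ → MeasurableSpace Ω := fun k => ⨆ i ∈ Iio k, MeasurableSpace.comap (Y i) inferInstance
  have hS_past : ∀ j k, j ≤ k → Measurable[M k] (S j) := fun j k hjk =>
    Finset.measurable_sum _ fun i hi => (comap_measurable (Y i)).mono
      (le_iSup₂ (f := fun i (_ : i ∈ Iio k) => MeasurableSpace.comap (Y i) inferInstance) i
        (lt_of_lt_of_le (Finset.mem_range.1 hi) hjk)) le_rfl
  let ℱ : Filtration ℕ m0 := Filtration.natural S fun k =>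
    (Finset.measurable_sum _ fun i _ => hmeas i).stronglyMeasurable
  refine Submartingale.measure_exists_ge_le (ℱ := ℱ)
    (submartingale_exp_mul_of_indep (Filtration.stronglyAdapted_natural _) (fun k => ?_)
      (fun k => ?_) fun k => hincr k ▸ hmgf k) hc a m
  · rw [hincr]
    refine indep_of_indep_of_le (indep_iSup_of_disjoint (fun i => (hmeas i).comap_le) hY
      (S := Iio k) (T := {k}) (by simp)) (iSup₂_le fun j hj => (hS_past j k hj).comap_le) ?_
    exact le_iSup₂ (f := fun i (_ : i ∈ ({k} : Set ℕ)) =>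
      MeasurableSpace.comap (Y i) inferInstance) k rfl
  · simpa [S] using hY.integrable_exp_mul_sum hmeas (s := Finset.range k) fun i _ => hint i

end MaximalInequality

theorem exists_nat_div_two_pow_near {x : ℝ} (hx : x ∈ Icc (0 : ℝ) 1) {η : ℝ} (hη : 0 < η) :
    ∃ n k : ℕ, k ≤ 2 ^ n ∧ |(k : ℝ) / 2 ^ n - x| < η := by
  obtain ⟨n, hn⟩ := exists_pow_lt_of_lt_one hη (by norm_num : (2⁻¹ : ℝ) < 1)
  have h2n : (0 : ℝ) < 2 ^ n := by positivity
  have hy : 0 ≤ x * 2 ^ n := mul_nonneg hx.1 h2n.le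
  refine ⟨n, ⌊x * 2 ^ n⌋₊, Nat.floor_le_of_le ?_, ?_⟩
  · exact_mod_cast mul_le_of_le_one_left h2n.le hx.2
  have hfloor : |(⌊x * 2 ^ n⌋₊ : ℝ) - x * 2 ^ n| < 1 := by
    rw [abs_sub_lt_iff]
    constructor <;> linarith [Nat.floor_le hy, Nat.lt_floor_add_one (x * 2 ^ n)]
  rw [inv_pow, inv_lt_iff_one_lt_mul₀ h2n] at hn
  rw [div_sub' h2n.ne', abs_div, abs_of_pos h2n, div_lt_iff₀ h2n, mul_comm _ x]
  linarith

theorem exists_lt_abs_sub_of_two_mul_lt_modulus {x : ℝ → ℝ} {T δ a : ℝ} (hδ : 0 < δ)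
    (hT : 0 ≤ T) (ha : 0 ≤ a) (h : 2 * a < modulus x T δ) :
    ∃ i < ⌈T / δ⌉₊, ∃ t ∈ Icc (i * δ) (i * δ + 2 * δ), a < |x t - x (i * δ)| := by
  obtain ⟨_, ⟨r, s, hr, hrs, hsT, hsr, rfl⟩, hlt⟩ :=
    exists_lt_of_lt_csSup (by exact ⟨_, 0, 0, le_rfl, le_rfl, hT, by simp [hδ.le], rfl⟩) h
  have hrs' : r < s := lt_of_le_of_ne hrs (by rintro rfl; rw [sub_self, abs_zero] at hlt; linarith)
  have hi_le : (⌊r / δ⌋₊ : ℝ) * δ ≤ r := (le_div_iff₀ hδ).1 (Nat.floor_le (div_nonneg hr hδ.le))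
  have hi_gt : r < (⌊r / δ⌋₊ : ℝ) * δ + δ := by
    have := Nat.lt_floor_add_one (r / δ)
    rw [div_lt_iff₀ hδ] at this
    linarith
  refine ⟨⌊r / δ⌋₊, (Nat.floor_lt (div_nonneg hr hδ.le)).2 ?_, ?_⟩
  · exact (div_lt_div_of_pos_right (hrs'.trans_le hsT) hδ).trans_le (Nat.le_ceil _)
  · by_contra! hfar
    have hs := hfar s ⟨hi_le.trans hrs, by linarith⟩
    have hr := hfar r ⟨hi_le, by linarith⟩
    have := abs_sub_le (x s) (x (⌊r / δ⌋₊ * δ)) (x r)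
    rw [abs_sub_comm (x (⌊r / δ⌋₊ * δ)) (x r)] at this
    linarith

namespace IsBrownianMotion

variable {Ω : Type*} {m0 : MeasurableSpace Ω} {P : Measure Ω} {W : ℝ → Ω → ℝ}

theorem neg (hW : IsBrownianMotion P W) : IsBrownianMotion P (-W) := by
  obtain ⟨hcont, hzero, hmeas, hlaw, hindep⟩ := hW
  refine ⟨fun ω => (hcont ω).neg, fun ω => by simp [hzero], fun t => (hmeas t).neg,
    fun s t hs hst => ?_, fun m u hu hu0 => ?_⟩
  · have hX : Measurable fun ω => W t ω - W s ω := (hmeas t).sub (hmeas s)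
    have hlaw_neg := congrArg (Measure.map fun x : ℝ => -x) (hlaw s t hs hst)
    rw [Measure.map_map measurable_neg hX, gaussianReal_map_neg, neg_zero] at hlaw_neg
    convert hlaw_neg using 2
    ext ω
    simp only [Pi.neg_apply, Function.comp_apply]
    ring
  · convert (hindep m u hu hu0).comp (fun _ x => -x) fun _ => measurable_neg using 1
    ext k ω
    simp only [Pi.neg_apply, Function.comp_apply]
    ring

theorem mgf_sub (hW : IsBrownianMotion P W) {s t : ℝ} (hs : 0 ≤ s) (hst : s ≤ t) (c : ℝ) :
    mgf (fun ω => W t ω - W s ω) P c = exp ((t - s) * c ^ 2 / 2) := by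
  rw [mgf_gaussianReal (hW.2.2.2.1 s t hs hst), Real.coe_toNNReal _ (sub_nonneg.2 hst)]
  ring_nf

theorem integrable_exp_mul_sub [IsProbabilityMeasure P] (hW : IsBrownianMotion P W) {s t : ℝ}
    (hs : 0 ≤ s) (hst : s ≤ t) (c : ℝ) : Integrable (fun ω => exp (c * (W t ω - W s ω))) P := by
  rw [← mgf_pos_iff, hW.mgf_sub hs hst]
  exact exp_pos _

theorem iIndepFun_sub {u : ℕ → ℝ} (hW : IsBrownianMotion P W) (hu : Monotone u)
    (hu0 : 0 ≤ u 0) : iIndepFun (fun k ω => W (u (k + 1)) ω - W (u k) ω) P :=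
  iIndepFun_of_forall_fin fun m => hW.2.2.2.2 m u hu hu0

theorem measure_exists_sub_ge_le [IsProbabilityMeasure P] (hW : IsBrownianMotion P W)
    {u : ℕ → ℝ} (hu : Monotone u) (hu0 : 0 ≤ u 0) {a L : ℝ} (ha : 0 < a) (hL : 0 < L) {m : ℕ}
    (hum : u m - u 0 ≤ L) :
    P {ω | ∃ k ≤ m, a ≤ W (u k) ω - W (u 0) ω} ≤ ENNReal.ofReal (exp (-(a ^ 2 / (2 * L)))) := by
  have hmeas : ∀ t, Measurable (W t) := hW.2.2.1
  have htel : ∀ k ω, ∑ i ∈ Finset.range k, (W (u (i + 1)) ω - W (u i) ω) =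
      W (u k) ω - W (u 0) ω := fun k ω => Finset.sum_range_sub (fun i => W (u i) ω) k
  have hincr_mgf : ∀ i c, mgf (fun ω => W (u (i + 1)) ω - W (u i) ω) P c =
      exp ((u (i + 1) - u i) * c ^ 2 / 2) := fun i c =>
    hW.mgf_sub (hu0.trans (hu (Nat.zero_le i))) (hu (Nat.le_succ i)) c
  have hmax := (hW.iIndepFun_sub hu hu0).measure_exists_sum_range_ge_le
    (fun i => (hmeas _).sub (hmeas _)) (div_pos ha hL)
    (fun i => hW.integrable_exp_mul_sub (hu0.trans (hu (Nat.zero_le i))) (hu (Nat.le_succ i)) _)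
    (fun i => by rw [hincr_mgf]; exact one_le_exp (by have := hu (Nat.le_succ i); positivity))
    a m
  simp only [htel, hW.mgf_sub hu0 (hu (Nat.zero_le m))] at hmax
  refine hmax.trans (ENNReal.ofReal_le_ofReal ?_)
  calc exp (-(a / L * a)) * exp ((u m - u 0) * (a / L) ^ 2 / 2)
      = exp (-(a / L * a) + (u m - u 0) * (a / L) ^ 2 / 2) := (exp_add _ _).symm
    _ ≤ exp (-(a / L * a) + L * (a / L) ^ 2 / 2) := by gcongr
    _ = exp (-(a ^ 2 / (2 * L))) := by congr 1; field_simp; ring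

theorem measure_exists_sub_gt_le [IsProbabilityMeasure P] (hW : IsBrownianMotion P W)
    {t₀ h a : ℝ} (ht₀ : 0 ≤ t₀) (hh : 0 < h) (ha : 0 < a) :
    P {ω | ∃ t ∈ Icc t₀ (t₀ + h), a < W t ω - W t₀ ω} ≤
      ENNReal.ofReal (exp (-(a ^ 2 / (2 * h)))) := by
  set grid : ℕ → ℕ → ℝ := fun n k => t₀ + h * (k / 2 ^ n)
  have hgrid0 : ∀ n, grid n 0 = t₀ := fun n => by simp [grid]
  set E : ℕ → Set Ω := fun n => {ω | ∃ k ≤ 2 ^ n, a ≤ W (grid n k) ω - W (grid n 0) ω}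
  have hE_mono : Monotone E := by
    refine monotone_nat_of_le_succ fun n ω ⟨k, hk, hωk⟩ => ⟨2 * k, by rw [pow_succ]; omega, ?_⟩
    have : grid (n + 1) (2 * k) = grid n k := by simp only [grid]; push_cast; field_simp; ring
    rwa [this, hgrid0, ← hgrid0 n]
  have hcover : {ω | ∃ t ∈ Icc t₀ (t₀ + h), a < W t ω - W t₀ ω} ⊆ ⋃ n, E n := by
    rintro ω ⟨t, ht, hat⟩
    obtain ⟨η, hη, hnear_t⟩ := Metric.eventually_nhds_iff.1
      ((((hW.1 ω).sub continuous_const).continuousAt (x := t)).eventually (lt_mem_nhds hat))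
    obtain ⟨n, k, hk, hnear⟩ := exists_nat_div_two_pow_near (x := (t - t₀) / h)
      ⟨div_nonneg (by linarith [ht.1]) hh.le, (div_le_one hh).2 (by linarith [ht.2])⟩
      (div_pos hη hh)
    refine mem_iUnion.2 ⟨n, k, hk, ?_⟩
    rw [hgrid0]
    refine (hnear_t ?_).le
    rw [Real.dist_eq, show grid n k - t = h * (k / 2 ^ n - (t - t₀) / h) by
      simp only [grid]; field_simp; ring, abs_mul, abs_of_pos hh]
    rwa [lt_div_iff₀' hh] at hnear
  calc P _ ≤ P (⋃ n, E n) := measure_mono hcover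
    _ = ⨆ n, P (E n) := hE_mono.measure_iUnion
    _ ≤ _ := iSup_le fun n => hW.measure_exists_sub_ge_le
        (fun i j hij => by simp only [grid]; gcongr) (by rw [hgrid0]; exact ht₀) ha hh
        (by simp [grid])

theorem measureReal_exists_abs_sub_gt_le [IsProbabilityMeasure P] (hW : IsBrownianMotion P W)
    {t₀ h a : ℝ} (ht₀ : 0 ≤ t₀) (hh : 0 < h) (ha : 0 < a) :
    P.real {ω | ∃ t ∈ Icc t₀ (t₀ + h), a < |W t ω - W t₀ ω|} ≤
      2 * exp (-(a ^ 2 / (2 * h))) := by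
  have hsplit : {ω | ∃ t ∈ Icc t₀ (t₀ + h), a < |W t ω - W t₀ ω|} ⊆
      {ω | ∃ t ∈ Icc t₀ (t₀ + h), a < W t ω - W t₀ ω} ∪
        {ω | ∃ t ∈ Icc t₀ (t₀ + h), a < (-W) t ω - (-W) t₀ ω} := by
    rintro ω ⟨t, ht, hat⟩
    rcases lt_abs.1 hat with hpos | hneg
    · exact Or.inl ⟨t, ht, hpos⟩
    · exact Or.inr ⟨t, ht, by simp only [Pi.neg_apply]; linarith⟩
  calc P.real _ ≤ P.real (_ ∪ _) := measureReal_mono hsplit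
    _ ≤ P.real _ + P.real _ := measureReal_union_le _ _
    _ ≤ exp (-(a ^ 2 / (2 * h))) + exp (-(a ^ 2 / (2 * h))) := add_le_add
        (ENNReal.toReal_le_of_le_ofReal (exp_pos _).le (hW.measure_exists_sub_gt_le ht₀ hh ha))
        (ENNReal.toReal_le_of_le_ofReal (exp_pos _).le (hW.neg.measure_exists_sub_gt_le ht₀ hh ha))
    _ = 2 * exp (-(a ^ 2 / (2 * h))) := by ring

theorem measureReal_two_mul_lt_modulus_le [IsProbabilityMeasure P] (hW : IsBrownianMotion P W)
    {T δ a : ℝ} (hδ : 0 < δ) (hT : 0 ≤ T) (ha : 0 < a) :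
    P.real {ω | 2 * a < modulus (fun t => W t ω) T δ} ≤
      ⌈T / δ⌉₊ * (2 * exp (-(a ^ 2 / (4 * δ)))) := by
  calc P.real _
      ≤ P.real (⋃ i ∈ Finset.range ⌈T / δ⌉₊,
          {ω | ∃ t ∈ Icc (i * δ) (i * δ + 2 * δ), a < |W t ω - W (i * δ) ω|}) := by
        refine measureReal_mono (fun ω hω => ?_) (measure_ne_top P _)
        obtain ⟨i, hi, t, ht, hat⟩ := exists_lt_abs_sub_of_two_mul_lt_modulus hδ hT ha.le hω
        exact mem_iUnion₂.2 ⟨i, Finset.mem_range.2 hi, t, ht, hat⟩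
    _ ≤ ∑ i ∈ Finset.range ⌈T / δ⌉₊, 2 * exp (-(a ^ 2 / (4 * δ))) := by
        refine (measureReal_biUnion_finset_le _ _).trans (Finset.sum_le_sum fun i _ => ?_)
        rw [show 4 * δ = 2 * (2 * δ) by ring]
        exact hW.measureReal_exists_abs_sub_gt_le (by positivity) (by positivity) ha
    _ = ⌈T / δ⌉₊ * (2 * exp (-(a ^ 2 / (4 * δ)))) := by
        rw [Finset.sum_const, Finset.card_range, nsmul_eq_mul]

end IsBrownianMotion

theorem ceil_div_mul_exp_neg_add_log_le {T δ : ℝ} (hδ : 0 < δ) (hδT : δ ≤ T) (s : ℝ) :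
    (⌈T / δ⌉₊ : ℝ) * exp (-(s + log (T / δ))) ≤ 2 * exp (-s) := by
  have hT : 0 < T := hδ.trans_le hδT
  rw [neg_add, exp_add, exp_neg (log _), exp_log (div_pos hT hδ)]
  calc (⌈T / δ⌉₊ : ℝ) * (exp (-s) * (T / δ)⁻¹) ≤ 2 * (T / δ) * (exp (-s) * (T / δ)⁻¹) := by
        gcongr
        exact Nat.ceil_le_two_mul (by linarith [(one_le_div hδ).2 hδT])
    _ = 2 * exp (-s) := by field_simp

theorem brownian_modulus_tail_general {Ω : Type*} [MeasurableSpace Ω]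
    (P : Measure Ω) [IsProbabilityMeasure P]
    (W : ℝ → Ω → ℝ) (hW : IsBrownianMotion P W)
    (T δ θ : ℝ) (hδ : 0 < δ) (hδT : δ ≤ T) :
    (P {ω | 4 * Real.sqrt (δ * (θ ^ 2 + Real.log (T / δ))) ≤
        modulus (fun t => W t ω) T δ}).toReal ≤ 8 * Real.exp (-θ ^ 2) := by
  by_cases htriv : 1 ≤ 8 * exp (-θ ^ 2)
  · exact measureReal_le_one.trans htriv
  have hT : 0 < T := hδ.trans_le hδT
  set β := θ ^ 2 + log (T / δ)
  have hβ : log 2 < β := by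
    have hexp : exp (θ ^ 2) * exp (-θ ^ 2) = 1 := by rw [← exp_add]; simp
    have : log 2 < θ ^ 2 := (log_lt_iff_lt_exp two_pos).2 (by nlinarith [exp_pos (-θ ^ 2)])
    linarith [log_nonneg ((one_le_div hδ).2 hδT)]
  -- `log 2` buys the strict inequality `2a < 4 √(δβ)` at the cost of a factor `2`
  set a := 2 * √(δ * (β - log 2))
  have hβδ : 0 < δ * (β - log 2) := mul_pos hδ (sub_pos.2 hβ)
  have hthreshold : 2 * a < 4 * √(δ * β) := by
    have : √(δ * (β - log 2)) < √(δ * β) :=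
      sqrt_lt_sqrt hβδ.le (by nlinarith [log_pos one_lt_two])
    linarith
  have hwindow : exp (-(a ^ 2 / (4 * δ))) = 2 * exp (-β) := by
    rw [show -(a ^ 2 / (4 * δ)) = -β + log 2 by rw [mul_pow, sq_sqrt hβδ.le]; field_simp; ring,
      exp_add, exp_log two_pos, mul_comm]
  calc P.real _ ≤ P.real {ω | 2 * a < modulus (fun t => W t ω) T δ} :=
        measureReal_mono (fun ω hω => hthreshold.trans_le hω) (measure_ne_top P _)
    _ ≤ ⌈T / δ⌉₊ * (2 * exp (-(a ^ 2 / (4 * δ)))) :=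
        hW.measureReal_two_mul_lt_modulus_le hδ hT.le (mul_pos two_pos (sqrt_pos.2 hβδ))
    _ = 4 * ((⌈T / δ⌉₊ : ℝ) * exp (-(θ ^ 2 + log (T / δ)))) := by rw [hwindow]; ring
    _ ≤ 8 * exp (-θ ^ 2) := by linarith [ceil_div_mul_exp_neg_add_log_le hδ hδT (θ ^ 2)]

/-- Tail bound for the modulus of continuity of Brownian motion: for `0 < δ ≤ T` and `θ > 0`,
`P(ω(W_T; δ) ≥ 4 √(δ(θ² + log(T/δ)))) ≤ 8 exp(-θ²)`. -/
theorem brownian_modulus_tail {Ω : Type*} [MeasurableSpace Ω]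
    (P : Measure Ω) [IsProbabilityMeasure P]
    (W : ℝ → Ω → ℝ) (hW : IsBrownianMotion P W)
    (T δ θ : ℝ) (hδ : 0 < δ) (hδT : δ ≤ T) (hθ : 0 < θ) :
    (P {ω | 4 * Real.sqrt (δ * (θ ^ 2 + Real.log (T / δ))) ≤
        modulus (fun t => W t ω) T δ}).toReal ≤ 8 * Real.exp (-θ ^ 2) :=
  brownian_modulus_tail_general P W hW T δ θ hδ hδT
end

section
/- For any continuous function x : [0,∞) → ℝ, the pair (ψ, φ) with ψ = Γx given by ψ(t) = x(t) − min_{s∈[0,t]}(x(s) ∧ 0) and φ(t) = −min_{s∈[0,t]}(x(s) ∧ 0) solves the Skorokhod problem on [0,∞): ψ(t) ≥ 0 for all t, φ is non-decreasing and continuous with φ(0) = 0, ψ(t) = x(t) + φ(t), and φ increases only when ψ = 0, i.e., ∫₀ᵗ 1_{{ψ(s) > 0}} dφ(s) = 0 for all t. -/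
open Set

/-- The Skorokhod map on the half-line: `(Γx)(t) = x(t) - min_{s ∈ [0,t]} (x(s) ∧ 0)`. -/
noncomputable def skorokhod (x : ℝ → ℝ) (t : ℝ) : ℝ :=
  x t - sInf ((fun s => min (x s) 0) '' Icc 0 t)

/-- The regulator term of the Skorokhod map: `φ(t) = - min_{s ∈ [0,t]} (x(s) ∧ 0)`. -/
noncomputable def skorokhodRegulator (x : ℝ → ℝ) (t : ℝ) : ℝ :=
  -sInf ((fun s => min (x s) 0) '' Icc 0 t)

/-!
The regulator is minus the running minimum of `x ∧ 0`, so `ψ = x - min_{[0,·]}(x ∧ 0) ≥ 0`, and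
`φ` is non-decreasing and continuous because running minima of continuous functions are. If `φ`
grew on `[s, t]`, the minimum of `x ∧ 0` over `[0, t]` would be attained at some `r ∈ (s, t]` with
a negative value; there `x r` equals its own running minimum, so `ψ r = 0`.
-/

noncomputable def runningInf (f : ℝ → ℝ) (a t : ℝ) : ℝ :=
  sInf (f '' Icc a t)

section RunningInf

variable {f : ℝ → ℝ} {a r s t : ℝ}

theorem runningInf_le (hf : Continuous f) (hr : r ∈ Icc a t) : runningInf f a t ≤ f r :=
  csInf_le (isCompact_Icc.image hf).bddBelow (mem_image_of_mem f hr)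

theorem runningInf_self (f : ℝ → ℝ) (a : ℝ) : runningInf f a a = f a := by
  simp [runningInf]

theorem antitoneOn_runningInf (hf : Continuous f) : AntitoneOn (runningInf f a) (Ici a) :=
  fun _ hs _ _ hst => csInf_le_csInf (isCompact_Icc.image hf).bddBelow
    ((nonempty_Icc.2 hs).image f) (image_mono (Icc_subset_Icc_right hst))

theorem exists_eq_runningInf (hf : Continuous f) (hat : a ≤ t) :
    ∃ r ∈ Icc a t, f r = runningInf f a t :=
  (isCompact_Icc.image hf).sInf_mem ((nonempty_Icc.2 hat).image f)

/-- Continuity comes from writing `[a, t]` as the image of `[0, 1]` under `θ ↦ a + θ (t - a)`,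
which turns the running infimum into an infimum over a fixed compact set. -/
theorem continuousOn_runningInf (hf : Continuous f) : ContinuousOn (runningInf f a) (Ici a) := by
  have hcont : Continuous fun t => sInf ((fun θ => f (a + θ • (t - a))) '' Icc (0 : ℝ) 1) :=
    isCompact_Icc.continuous_sInf (by fun_prop)
  refine hcont.continuousOn.congr fun t (ht : a ≤ t) => ?_
  rw [runningInf, ← segment_eq_Icc ht, segment_eq_image', image_image]

theorem exists_mem_Ioc_eq_runningInf_of_lt (hf : Continuous f) (has : a ≤ s) (hst : s ≤ t)
    (hlt : runningInf f a t < runningInf f a s) :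
    ∃ r ∈ Ioc s t, f r = runningInf f a r ∧ f r < runningInf f a s := by
  obtain ⟨r, hr, hfr⟩ := exists_eq_runningInf hf (has.trans hst)
  have hsr : s < r := by
    by_contra! hrs
    exact (runningInf_le hf ⟨hr.1, hrs⟩).not_gt (hfr ▸ hlt)
  have hr_eq : f r = runningInf f a r :=
    le_antisymm (hfr ▸ antitoneOn_runningInf hf (has.trans hsr.le : a ≤ r) (hr.1.trans hr.2) hr.2)
      (runningInf_le hf ⟨hr.1, le_rfl⟩)
  exact ⟨r, ⟨hsr, hr.2⟩, hr_eq, hfr ▸ hlt⟩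

end RunningInf

theorem skorokhodRegulator_eq_neg_runningInf (x : ℝ → ℝ) :
    skorokhodRegulator x = -runningInf (fun s => min (x s) 0) 0 :=
  rfl

theorem skorokhod_eq_add_skorokhodRegulator (x : ℝ → ℝ) (t : ℝ) :
    skorokhod x t = x t + skorokhodRegulator x t :=
  sub_eq_add_neg _ _

theorem skorokhod_nonneg {x : ℝ → ℝ} (hx : Continuous x) {t : ℝ} (ht : 0 ≤ t) :
    0 ≤ skorokhod x t :=
  sub_nonneg.2 <| (runningInf_le (hx.min continuous_const) ⟨ht, le_rfl⟩).trans (min_le_left _ _)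

theorem skorokhodRegulator_eq_of_forall_pos {x : ℝ → ℝ} (hx : Continuous x) {s t : ℝ}
    (hs : 0 ≤ s) (hst : s ≤ t) (hpos : ∀ r ∈ Icc s t, 0 < skorokhod x r) :
    skorokhodRegulator x s = skorokhodRegulator x t := by
  set g : ℝ → ℝ := fun s => min (x s) 0
  have hg : Continuous g := hx.min continuous_const
  rw [skorokhodRegulator_eq_neg_runningInf, Pi.neg_apply, Pi.neg_apply, neg_inj]
  refine ((antitoneOn_runningInf hg hs (hs.trans hst) hst).lt_or_eq.resolve_left
    fun hlt => ?_).symm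
  obtain ⟨r, hr, hgr, hgr_lt⟩ := exists_mem_Ioc_eq_runningInf_of_lt hg hs hst hlt
  have hg_neg : g r < 0 :=
    hgr_lt.trans_le ((runningInf_le hg ⟨hs, le_rfl⟩).trans (min_le_right _ _))
  have hx_neg : x r < 0 := (min_lt_iff.1 hg_neg).resolve_right (lt_irrefl 0)
  have hxr : x r = g r := (min_eq_left hx_neg.le).symm
  have hψ : skorokhod x r = 0 := by
    change x r - runningInf g 0 r = 0
    rw [hxr, hgr, sub_self]
  exact (hpos r ⟨hr.1.le, hr.2⟩).ne' hψ

/-- The pair `(ψ, φ) = (Γx, -min_{[0,·]}(x ∧ 0))` solves the Skorokhod problem on `[0,∞)`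
for a continuous input `x` with `x(0) ≥ 0`: `ψ ≥ 0`; `φ` is non-decreasing, continuous and
starts at `0`; `ψ = x + φ`; and `φ` increases only when `ψ = 0`, i.e. `φ` is constant on
every interval where `ψ` stays positive (so the Stieltjes measure `dφ` is supported on
`{ψ = 0}` and `∫₀ᵗ 1_{ψ > 0} dφ = 0`). -/
theorem skorokhod_solves_skorokhod_problem (x : ℝ → ℝ) (hx : Continuous x)
    (hx0 : 0 ≤ x 0) :
    (∀ t : ℝ, 0 ≤ t → 0 ≤ skorokhod x t) ∧
    (MonotoneOn (skorokhodRegulator x) (Ici 0) ∧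
      ContinuousOn (skorokhodRegulator x) (Ici 0) ∧ skorokhodRegulator x 0 = 0) ∧
    (∀ t : ℝ, 0 ≤ t → skorokhod x t = x t + skorokhodRegulator x t) ∧
    (∀ s t : ℝ, 0 ≤ s → s ≤ t → (∀ r ∈ Icc s t, 0 < skorokhod x r) →
      skorokhodRegulator x s = skorokhodRegulator x t) := by
  have hg : Continuous fun s => min (x s) 0 := hx.min continuous_const
  rw [skorokhodRegulator_eq_neg_runningInf]
  refine ⟨fun t => skorokhod_nonneg hx, ⟨(antitoneOn_runningInf hg).neg,
    (continuousOn_runningInf hg).neg, ?_⟩, fun t _ => skorokhod_eq_add_skorokhodRegulator x t,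
    fun s t => skorokhodRegulator_eq_of_forall_pos hx⟩
  rw [Pi.neg_apply, runningInf_self, min_eq_right hx0, neg_zero]
end
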